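/- For any natural number N and any points x₁,…,x_N ∈ ℝ, the N×N matrix K with entries K_{n,n'} = sinc(x_n − x_{n'}) is symmetric positive semidefinite (i.e., the sinc function is a valid reproducing kernel). -/

import Mathlib

/-!
`sinc t = ∫₀¹ cos (ω π t) dω`, so the sinc matrix is an average, over a finite measure, of the
matrices `cos (θ (xₙ - xₙ'))`. Each of these is a Gram matrix, since
`cos (a - b) = cos a cos b + sin a sin b`, and averages of positive semidefinite matrices are
positive semidefinite (the easy direction of Bochner's theorem).
-/

noncomputable def sinc (t : ℝ) : ℝ :=
  if t = 0 then 1 else Real.sin (Real.pi * t) / (Real.pi * t)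

open MeasureTheory Matrix
open Real hiding sinc

theorem Matrix.posSemidef_cos_sub {ι : Type*} [Fintype ι] (a : ι → ℝ) :
    (of fun i j => cos (a i - a j)).PosSemidef := by
  convert posSemidef_conjTranspose_mul_self (of ![cos ∘ a, sin ∘ a]) using 1
  ext i j
  simp [mul_apply, Fin.sum_univ_two, cos_sub]

theorem Matrix.posSemidef_integral {ι Ω : Type*} [Fintype ι] [MeasurableSpace Ω]
    {μ : Measure Ω} {K : Ω → Matrix ι ι ℝ} (hK : ∀ i j, Integrable (fun ω => K ω i j) μ)
    (hpsd : ∀ᵐ ω ∂μ, (K ω).PosSemidef) :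
    (of fun i j => ∫ ω, K ω i j ∂μ).PosSemidef := by
  refine .of_dotProduct_mulVec_nonneg ?_ fun v => ?_
  · ext i j
    simp only [conjTranspose_apply, of_apply, star_trivial]
    exact integral_congr_ae (hpsd.mono fun ω h => h.isHermitian.apply i j)
  · have hquad : star v ⬝ᵥ ((of fun i j => ∫ ω, K ω i j ∂μ) *ᵥ v)
        = ∫ ω, star v ⬝ᵥ (K ω *ᵥ v) ∂μ := by
      simp only [dotProduct, mulVec, of_apply, star_trivial]
      rw [integral_finsetSum _ fun i _ => (integrable_finsetSum _ fun j _ =>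
        (hK i j).mul_const _).const_mul _]
      refine Finset.sum_congr rfl fun i _ => ?_
      rw [integral_const_mul, integral_finsetSum _ fun j _ => (hK i j).mul_const _]
      simp only [integral_mul_const]
    rw [hquad]
    exact integral_nonneg_of_ae (hpsd.mono fun ω h => h.dotProduct_mulVec_nonneg v)

theorem Matrix.posSemidef_integral_cos_mul_sub {ι : Type*} [Fintype ι] (μ : Measure ℝ)
    [IsFiniteMeasure μ] (x : ι → ℝ) :
    (of fun i j => ∫ ω, cos (ω * (x i - x j)) ∂μ).PosSemidef := by
  refine posSemidef_integral (K := fun ω => of fun i j => cos (ω * (x i - x j)))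
    (fun i j => ?_) (.of_forall fun ω => ?_)
  · simp only [of_apply]
    exact Integrable.of_bound (by fun_prop) 1 (.of_forall fun ω => by simpa using abs_cos_le_one _)
  · simpa only [mul_sub] using posSemidef_cos_sub fun i => ω * x i

theorem sinc_eq_integral_cos (t : ℝ) :
    sinc t = ∫ ω in Set.Ioc 0 1, cos (ω * (π * t)) := by
  rw [← intervalIntegral.integral_of_le zero_le_one]
  rcases eq_or_ne t 0 with rfl | ht
  · simp [sinc]
  · have hπt : π * t ≠ 0 := mul_ne_zero pi_ne_zero ht
    rw [sinc, if_neg ht, intervalIntegral.integral_comp_mul_right cos hπt, integral_cos]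
    simp [div_eq_inv_mul]

theorem sinc_gram_matrix_posSemidef (N : ℕ) (x : Fin N → ℝ) :
    (Matrix.of fun n n' : Fin N => sinc (x n - x n')).PosSemidef := by
  simpa only [sinc_eq_integral_cos, mul_sub] using
    posSemidef_integral_cos_mul_sub (volume.restrict (Set.Ioc 0 1)) fun n => π * x n
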